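/- Let $0<q<1$, $\kappa \ge 1$. Under the principal specialization, the rectangular Schur function satisfies the product formula $Q_i^{(a)} = \prod_{b=1}^a \prod_{j=1}^i \frac{[\kappa+1+j-b]}{[a-b+i-j+1]}$, where $[x] = q^{x/2} - q^{-x/2}$, and these quantities satisfy the Q-system relation $(Q_i^{(a)})^2 = Q_{i-1}^{(a)} Q_{i+1}^{(a)} + Q_i^{(a-1)} Q_i^{(a+1)}$ for $1 \le a \le \kappa$ and $i \ge 1$, with conventions $Q_i^{(0)} = Q_i^{(\kappa+1)} = 1$, $Q_0^{(a)} = 1$, $Q_{-1}^{(a)} = 0$. -/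

import Mathlib

/-- `[x] = q^{x/2} - q^{-x/2}`. -/
noncomputable def br (q x : ℝ) : ℝ := Real.rpow q (x/2) - Real.rpow q (-x/2)

/-- Principally specialized rectangular character
`Q_i^{(a)} = ∏_{b=1}^a ∏_{j=1}^i [κ+1+j-b]/[a-b+i-j+1]` (empty products = 1, so
`Q_0^{(a)} = 1` and `Q_i^{(0)} = 1`; also `Q_i^{(κ+1)} = 1` holds for this formula). -/
noncomputable def QQ (κ : ℕ) (q : ℝ) (a i : ℕ) : ℝ :=
  ∏ b ∈ Finset.Icc 1 a, ∏ j ∈ Finset.Icc 1 i,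
    br q ((κ:ℝ) + 1 + (j:ℝ) - (b:ℝ)) / br q ((a:ℝ) - (b:ℝ) + (i:ℝ) - (j:ℝ) + 1)

/-! Writing `Q_i^{(a)}` as the product of `[κ + 1 + c]` over the contents `c` of the cells of the
`a × i` rectangle divided by the product of their hook lengths, the ratios `Q_{i+1}^{(a)} / Q_i^{(a)}`
and `Q_i^{(a+1)} / Q_i^{(a)}` become single products along a column or a row, and their own ratios
telescope. Dividing the Q-system by `(Q_i^{(a)})^2` therefore leaves
`1 = [κ+1+i][i] / ([κ+1+i-a][a+i]) + [κ+1-a][a] / ([κ+1+i-a][a+i])`,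
the three-term identity `[x+m][m] + [x-n][n] = [x+m-n][m+n]` at `x = κ+1`, `m = i`, `n = a`. -/

open Finset

lemma Finset.prod_Icc_one_eq_prod_range {M : Type*} [CommMonoid M] (f : ℕ → M) (n : ℕ) :
    ∏ k ∈ Icc 1 n, f k = ∏ k ∈ range n, f (k + 1) := by
  rw [range_eq_Ico, prod_Ico_add']
  rfl

lemma Finset.prod_range_reflect_cast {M : Type*} [CommMonoid M] (f : ℝ → M) (n : ℕ) :
    ∏ k ∈ range n, f (n - 1 - k) = ∏ k ∈ range n, f k := by
  rw [← prod_range_reflect (fun k : ℕ => f k)]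
  refine prod_congr rfl fun k hk => ?_
  rw [Nat.sub_sub, Nat.cast_sub (by rw [mem_range] at hk; omega)]
  push_cast
  ring_nf

lemma Finset.prod_range_div_prod_range_succ {K : Type*} [Field K] (f : ℕ → K) (n : ℕ)
    (hf : ∀ k ≤ n, f k ≠ 0) :
    (∏ k ∈ range n, f k) / ∏ k ∈ range n, f (k + 1) = f 0 / f n := by
  have hprod : ∏ k ∈ range n, f (k + 1) ≠ 0 :=
    prod_ne_zero_iff.2 fun k hk => hf _ (by rw [mem_range] at hk; omega)
  rw [div_eq_div_iff hprod (hf n le_rfl), ← prod_range_succ, prod_range_succ', mul_comm]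

lemma mul_mul_eq_sq_mul_div {K : Type*} [Field K] {x y z r s : K} (hr : r ≠ 0)
    (hy : y = x * r) (hz : z = y * s) : x * z = y ^ 2 * (s / r) := by
  subst hy hz
  field_simp

section Bracket

variable {q : ℝ}

lemma br_eq (hq : 0 < q) (x : ℝ) : br q x = q ^ (x / 2) - (q ^ (x / 2))⁻¹ := by
  rw [← Real.rpow_neg hq.le, ← neg_div]
  rfl

lemma br_ne_zero (hq0 : 0 < q) (hq1 : q ≠ 1) {x : ℝ} (hx : x ≠ 0) : br q x ≠ 0 := by
  rw [br, sub_ne_zero]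
  change q ^ (x / 2) ≠ q ^ (-x / 2)
  rw [Ne, Real.rpow_right_inj hq0 hq1]
  intro h
  exact hx (by linarith)

lemma br_three_term (hq : 0 < q) (x m n : ℝ) :
    br q (x + m) * br q m + br q (x - n) * br q n = br q (x + m - n) * br q (m + n) := by
  simp only [br_eq hq, add_div, sub_div, Real.rpow_add hq, Real.rpow_sub hq]
  have := Real.rpow_pos_of_pos hq
  field_simp
  ring

end Bracket

section Character

variable {κ : ℕ} {q : ℝ}

lemma QQ_eq_div (a i : ℕ) : QQ κ q a i =
    (∏ b ∈ range a, ∏ j ∈ range i, br q (κ + 1 + j - b)) /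
      ∏ b ∈ range a, ∏ j ∈ range i, br q (b + j + 1) := by
  simp only [QQ, prod_div_distrib, prod_Icc_one_eq_prod_range]
  congr 1
  · push_cast
    refine prod_congr rfl fun b _ => prod_congr rfl fun j _ => by ring_nf
  · rw [← prod_range_reflect_cast (fun y => ∏ j ∈ range i, br q (y + j + 1))]
    refine prod_congr rfl fun b _ => ?_
    rw [← prod_range_reflect_cast (fun y => br q (a - 1 - b + y + 1))]
    push_cast
    refine prod_congr rfl fun j _ => by ring_nf

noncomputable def ratioRight (κ : ℕ) (q : ℝ) (a i : ℕ) : ℝ :=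
  (∏ b ∈ range a, br q (κ + 1 + i - b)) / ∏ b ∈ range a, br q (b + i + 1)

noncomputable def ratioLeft (κ : ℕ) (q : ℝ) (a i : ℕ) : ℝ :=
  (∏ j ∈ range i, br q (κ + 1 + j - a)) / ∏ j ∈ range i, br q (a + j + 1)

lemma QQ_add_one_right (a i : ℕ) : QQ κ q a (i + 1) = QQ κ q a i * ratioRight κ q a i := by
  simp only [QQ_eq_div, ratioRight, prod_range_succ, prod_mul_distrib, mul_div_mul_comm]

lemma QQ_add_one_left (a i : ℕ) : QQ κ q (a + 1) i = QQ κ q a i * ratioLeft κ q a i := by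
  simp only [QQ_eq_div, ratioLeft, prod_range_succ, mul_div_mul_comm]

lemma prod_prod_br_add_add_one_ne_zero (hq0 : 0 < q) (hq1 : q ≠ 1) (a i : ℕ) :
    ∏ b ∈ range a, ∏ j ∈ range i, br q (b + j + 1) ≠ 0 :=
  prod_ne_zero_iff.2 fun _ _ => prod_ne_zero_iff.2 fun _ _ => br_ne_zero hq0 hq1 (by positivity)

lemma QQ_kappa_add_one (hq0 : 0 < q) (hq1 : q ≠ 1) (i : ℕ) : QQ κ q (κ + 1) i = 1 := by
  rw [QQ_eq_div, div_eq_one_iff_eq (prod_prod_br_add_add_one_ne_zero hq0 hq1 _ _),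
    ← prod_range_reflect_cast (fun y => ∏ j ∈ range i, br q (y + j + 1))]
  push_cast
  refine prod_congr rfl fun b _ => prod_congr rfl fun j _ => by ring_nf

lemma ratioRight_ne_zero (hq0 : 0 < q) (hq1 : q ≠ 1) {a : ℕ} (ha : a ≤ κ) (i : ℕ) :
    ratioRight κ q a i ≠ 0 := by
  refine div_ne_zero (prod_ne_zero_iff.2 fun b hb => br_ne_zero hq0 hq1 ?_)
    (prod_ne_zero_iff.2 fun _ _ => br_ne_zero hq0 hq1 (by positivity))
  have : (b : ℝ) + 1 ≤ κ := by exact_mod_cast (mem_range.1 hb).trans_le ha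
  linarith

lemma ratioLeft_ne_zero (hq0 : 0 < q) (hq1 : q ≠ 1) {a : ℕ} (ha : a ≤ κ) (i : ℕ) :
    ratioLeft κ q a i ≠ 0 := by
  have : (a : ℝ) ≤ κ := by exact_mod_cast ha
  refine div_ne_zero (prod_ne_zero_iff.2 fun j _ => br_ne_zero hq0 hq1 ?_)
    (prod_ne_zero_iff.2 fun _ _ => br_ne_zero hq0 hq1 (by positivity))
  have : (0 : ℝ) ≤ j := j.cast_nonneg
  linarith

lemma ratioRight_add_one_div (hq0 : 0 < q) (hq1 : q ≠ 1) {a : ℕ} (ha : a ≤ κ) (i : ℕ) :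
    ratioRight κ q a (i + 1) / ratioRight κ q a i =
      br q (κ + 2 + i) * br q (i + 1) / (br q (κ + 2 + i - a) * br q (a + i + 1)) := by
  have hcontent : (∏ b ∈ range a, br q (κ + 1 + (i + 1 : ℕ) - b)) /
      ∏ b ∈ range a, br q (κ + 1 + i - b) = br q (κ + 2 + i) / br q (κ + 2 + i - a) := by
    have hne (b : ℕ) (hb : b ≤ a) : br q (κ + 2 + i - b) ≠ 0 := by
      have : (b : ℝ) ≤ κ := by exact_mod_cast hb.trans ha
      exact br_ne_zero hq0 hq1 (by linarith)
    convert prod_range_div_prod_range_succ _ a hne using 3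
    all_goals push_cast; ring_nf
  have hhook : (∏ b ∈ range a, br q (b + i + 1)) /
      ∏ b ∈ range a, br q (b + (i + 1 : ℕ) + 1) = br q (i + 1) / br q (a + i + 1) := by
    convert prod_range_div_prod_range_succ (fun b => br q (b + i + 1)) a
      (fun b _ => br_ne_zero hq0 hq1 (by positivity)) using 3
    all_goals push_cast; ring_nf
  rw [ratioRight, ratioRight, div_div_div_comm, hcontent,
    ← inv_div (∏ b ∈ range a, br q (b + i + 1)), hhook, div_inv_eq_mul, div_mul_div_comm]

lemma ratioLeft_add_one_div (hq0 : 0 < q) (hq1 : q ≠ 1) {a : ℕ} (ha : a < κ) (i : ℕ) :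
    ratioLeft κ q (a + 1) i / ratioLeft κ q a i =
      br q (κ - a) * br q (a + 1) / (br q (κ - a + i) * br q (a + 1 + i)) := by
  have hcontent : (∏ j ∈ range i, br q (κ + 1 + j - (a + 1 : ℕ))) /
      ∏ j ∈ range i, br q (κ + 1 + j - a) = br q (κ - a) / br q (κ - a + i) := by
    have hne (j : ℕ) (_ : j ≤ i) : br q (κ - a + j) ≠ 0 := by
      have : (a : ℝ) + 1 ≤ κ := by exact_mod_cast ha
      exact br_ne_zero hq0 hq1 (by linarith [j.cast_nonneg (α := ℝ)])
    convert prod_range_div_prod_range_succ _ i hne using 3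
    all_goals push_cast; ring_nf
  have hhook : (∏ j ∈ range i, br q (a + j + 1)) /
      ∏ j ∈ range i, br q ((a + 1 : ℕ) + j + 1) = br q (a + 1) / br q (a + 1 + i) := by
    convert prod_range_div_prod_range_succ (fun j => br q (a + 1 + j)) i
      (fun j _ => br_ne_zero hq0 hq1 (by positivity)) using 3
    all_goals push_cast; ring_nf
  rw [ratioLeft, ratioLeft, div_div_div_comm, hcontent,
    ← inv_div (∏ j ∈ range i, br q (a + j + 1)), hhook, div_inv_eq_mul, div_mul_div_comm]

lemma QQ_mul_QQ_add_two_right (hq0 : 0 < q) (hq1 : q ≠ 1) {a : ℕ} (ha : a ≤ κ) (i : ℕ) :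
    QQ κ q a i * QQ κ q a (i + 2) = QQ κ q a (i + 1) ^ 2 *
      (br q (κ + 2 + i) * br q (i + 1) / (br q (κ + 2 + i - a) * br q (a + i + 1))) := by
  rw [← ratioRight_add_one_div hq0 hq1 ha]
  exact mul_mul_eq_sq_mul_div (ratioRight_ne_zero hq0 hq1 ha i) (QQ_add_one_right a i)
    (QQ_add_one_right a (i + 1))

lemma QQ_mul_QQ_add_two_left (hq0 : 0 < q) (hq1 : q ≠ 1) {a : ℕ} (ha : a < κ) (i : ℕ) :
    QQ κ q a i * QQ κ q (a + 2) i = QQ κ q (a + 1) i ^ 2 *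
      (br q (κ - a) * br q (a + 1) / (br q (κ - a + i) * br q (a + 1 + i))) := by
  rw [← ratioLeft_add_one_div hq0 hq1 ha]
  exact mul_mul_eq_sq_mul_div (ratioLeft_ne_zero hq0 hq1 ha.le i) (QQ_add_one_left a i)
    (QQ_add_one_left (a + 1) i)

end Character

theorem stmt7_general (κ : ℕ) (q : ℝ) (hq0 : 0 < q) (hq1 : q < 1)
    (a i : ℕ) (ha1 : 1 ≤ a) (ha2 : a ≤ κ) (hi : 1 ≤ i) :
    (QQ κ q a 0 = 1 ∧ QQ κ q 0 i = 1 ∧ QQ κ q (κ+1) i = 1)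
    ∧ (QQ κ q a i)^2
        = QQ κ q a (i-1) * QQ κ q a (i+1) + QQ κ q (a-1) i * QQ κ q (a+1) i := by
  refine ⟨⟨by simp [QQ], by simp [QQ], QQ_kappa_add_one hq0 hq1.ne i⟩, ?_⟩
  obtain ⟨c, rfl⟩ := Nat.exists_eq_add_of_le' ha1
  obtain ⟨m, rfl⟩ := Nat.exists_eq_add_of_le' hi
  have hc : (c : ℝ) + 1 ≤ κ := by exact_mod_cast ha2
  have hX : br q (κ + 1 + (m + 1) - (c + 1)) ≠ 0 := br_ne_zero hq0 hq1.ne (by linarith)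
  have hY : br q (m + 1 + (c + 1)) ≠ 0 := br_ne_zero hq0 hq1.ne (by positivity)
  rw [Nat.add_sub_cancel, Nat.add_sub_cancel, add_assoc m, one_add_one_eq_two, add_assoc c,
    one_add_one_eq_two, QQ_mul_QQ_add_two_right hq0 hq1.ne ha2,
    QQ_mul_QQ_add_two_left hq0 hq1.ne (by omega), ← mul_add]
  convert (mul_one _).symm using 2
  calc _ = (br q (κ + 1 + (m + 1)) * br q (m + 1) + br q (κ + 1 - (c + 1)) * br q (c + 1)) /
        (br q (κ + 1 + (m + 1) - (c + 1)) * br q (m + 1 + (c + 1))) := by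
        push_cast
        ring_nf
    _ = 1 := by rw [br_three_term hq0, div_self (mul_ne_zero hX hY)]

theorem stmt7 (κ : ℕ) (hκ : 1 ≤ κ) (q : ℝ) (hq0 : 0 < q) (hq1 : q < 1)
    (a i : ℕ) (ha1 : 1 ≤ a) (ha2 : a ≤ κ) (hi : 1 ≤ i) :
    (QQ κ q a 0 = 1 ∧ QQ κ q 0 i = 1 ∧ QQ κ q (κ+1) i = 1)
    ∧ (QQ κ q a i)^2
        = QQ κ q a (i-1) * QQ κ q a (i+1) + QQ κ q (a-1) i * QQ κ q (a+1) i :=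
  stmt7_general κ q hq0 hq1 a i ha1 ha2 hi
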